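/- arXiv:2302.13077 — 2 statements merged into one kernel-verified Lean document; each statement's English description precedes it below -/
import Mathlib

section
/- Let 1 < q < p be real numbers, and let u, v > 0 and A, B ≥ 0 be real numbers. Then q·(v/u)^(q-1)·A^(p-1)·B ≤ (q-1)·(v/u)^q·A^p + ((p-q)/p)·A^p + (q/p)·B^p. -/
/-! Since `(q - 1)/q + (p - q)/(p q) + 1/p = 1`, the inequality divided by `q` is the weighted
AM–GM inequality for `t^q A^p`, `A^p` and `B^p` with these weights, `t = v/u`: the weighted
geometric mean is exactly `t^(q-1) A^(p-1) B`. -/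

open Real

lemma rpow_weighted_prod_eq {p q t A B : ℝ} (hq : 1 < q) (hqp : q < p)
    (ht : 0 ≤ t) (hA : 0 ≤ A) (hB : 0 ≤ B) :
    (t ^ q * A ^ p) ^ ((q - 1) / q) * (A ^ p) ^ ((p - q) / (p * q)) * (B ^ p) ^ (1 / p) =
      t ^ (q - 1) * A ^ (p - 1) * B := by
  have hq0 : q ≠ 0 := by linarith
  have hp0 : p ≠ 0 := by linarith
  have hA_exp : p * ((q - 1) / q) + p * ((p - q) / (p * q)) = p - 1 := by
    field_simp; ring
  rw [mul_rpow (rpow_nonneg ht q) (rpow_nonneg hA p), ← rpow_mul ht, ← rpow_mul hA,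
    ← rpow_mul hA, ← rpow_mul hB, mul_div_cancel₀ _ hq0, mul_one_div_cancel hp0, rpow_one,
    mul_assoc (t ^ (q - 1)), ← rpow_add' hA (by rw [hA_exp]; linarith), hA_exp]

lemma mul_rpow_mul_rpow_mul_le {p q t A B : ℝ} (hq : 1 < q) (hqp : q < p)
    (ht : 0 ≤ t) (hA : 0 ≤ A) (hB : 0 ≤ B) :
    q * t ^ (q - 1) * A ^ (p - 1) * B ≤
      (q - 1) * t ^ q * A ^ p + ((p - q) / p) * A ^ p + (q / p) * B ^ p := by
  have hq0 : 0 < q := by linarith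
  have hp0 : 0 < p := by linarith
  have amgm := geom_mean_le_arith_mean3_weighted (w₂ := (p - q) / (p * q))
    (div_nonneg (sub_nonneg.2 hq.le) hq0.le) (div_nonneg (sub_nonneg.2 hqp.le) (by positivity))
    (one_div_nonneg.2 hp0.le) (mul_nonneg (rpow_nonneg ht q) (rpow_nonneg hA p))
    (rpow_nonneg hA p) (rpow_nonneg hB p) (by field_simp; ring)
  rw [rpow_weighted_prod_eq hq hqp ht hA hB] at amgm
  calc q * t ^ (q - 1) * A ^ (p - 1) * B = q * (t ^ (q - 1) * A ^ (p - 1) * B) := by ring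
    _ ≤ q * ((q - 1) / q * (t ^ q * A ^ p) + (p - q) / (p * q) * A ^ p + 1 / p * B ^ p) :=
      mul_le_mul_of_nonneg_left amgm hq0.le
    _ = _ := by field_simp

theorem young_type_ineq_qp (p q u v A B : ℝ) (hq : 1 < q) (hqp : q < p)
    (hu : 0 < u) (hv : 0 < v) (hA : 0 ≤ A) (hB : 0 ≤ B) :
    q * (v / u) ^ (q - 1) * A ^ (p - 1) * B ≤
      (q - 1) * (v / u) ^ q * A ^ p + ((p - q) / p) * A ^ p + (q / p) * B ^ p :=
  mul_rpow_mul_rpow_mul_le hq hqp (div_pos hv hu).le hA hB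
end

section
/- Let 1 < q < ∞ and let u, v be positive differentiable functions on an open set Ω ⊆ ℝ^N. Define the Picone integrand R(u,v)(x) = (1 + (q−1)(v/u)^q)|∇u|^q − q(v/u)^(q−1)|∇u|^(q−2)(∇u·∇v) + (1 + (q−1)(u/v)^q)|∇v|^q − q(u/v)^(q−1)|∇v|^(q−2)(∇v·∇u). Then R(u,v)(x) ≥ 0 at every point x, and R(u,v)(x) = 0 if and only if u(x)∇v(x) = v(x)∇u(x). -/
open Real RealInnerProductSpace

/-!
Write `t = v/u`, `g = ∇u`, `h = ∇v`. The integrand splits as the sum of the classical Picone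
expressions `piconeGap q t g h + piconeGap q t⁻¹ h g`. Each of these is the sum of a Young gap
`(q-1)(t‖g‖)^q + ‖h‖^q - q (t‖g‖)^(q-1) ‖h‖`, which vanishes iff `t‖g‖ = ‖h‖`, and a nonnegative
multiple of the Cauchy–Schwarz gap `‖g‖‖h‖ - ⟪g, h⟫`; both vanish exactly when `h = t • g`.
-/

namespace Real

variable {q X B : ℝ}

private theorem young_bound_rpow_sub_one_eq (hq : 1 < q) (hX : 0 ≤ X) :
    q * ((X ^ (q - 1)) ^ q.conjExponent / q.conjExponent + B ^ q / q) =
      (q - 1) * X ^ q + B ^ q := by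
  have hq₁ : q - 1 ≠ 0 := sub_ne_zero.mpr hq.ne'
  rw [← rpow_mul hX, conjExponent, mul_div_cancel₀ _ hq₁]
  field_simp

theorem mul_rpow_sub_one_mul_le (hq : 1 < q) (hX : 0 ≤ X) (hB : 0 ≤ B) :
    q * (X ^ (q - 1) * B) ≤ (q - 1) * X ^ q + B ^ q := by
  rw [← young_bound_rpow_sub_one_eq hq hX]
  exact mul_le_mul_of_nonneg_left (young_inequality_of_nonneg (rpow_nonneg hX _) hB
    (HolderConjugate.conjExponent hq).symm) (by linarith)

theorem mul_rpow_sub_one_mul_eq_iff (hq : 1 < q) (hX : 0 ≤ X) (hB : 0 ≤ B) :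
    q * (X ^ (q - 1) * B) = (q - 1) * X ^ q + B ^ q ↔ X = B := by
  rw [← young_bound_rpow_sub_one_eq hq hX, mul_right_inj' (by linarith),
    young_inequality_eq_iff_of_nonneg (rpow_nonneg hX _) hB
      (HolderConjugate.conjExponent hq).symm,
    ← rpow_mul hX, conjExponent, mul_div_cancel₀ _ (sub_ne_zero.mpr hq.ne'),
    rpow_left_inj hX hB (by linarith)]

end Real

variable {E : Type*} [NormedAddCommGroup E] [InnerProductSpace ℝ E]

theorem eq_smul_of_inner_eq_norm_mul_of_norm_eq {g h : E} {t : ℝ}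
    (hinner : ⟪g, h⟫ = ‖g‖ * ‖h‖) (hnorm : ‖h‖ = t * ‖g‖) : h = t • g := by
  rcases eq_or_ne g 0 with rfl | hg
  · simpa using hnorm
  have hg' : ‖g‖ ≠ 0 := norm_ne_zero_iff.mpr hg
  have : ‖g‖ • h = ‖g‖ • (t • g) := by
    rw [← inner_eq_norm_mul_iff_real.mp hinner, hnorm, smul_smul, mul_comm]
  exact smul_right_injective E hg' this

/-- With `g = ∇u`, `h = ∇v`, `t = v/u` this is `|∇v|^q - |∇u|^(q-2) ∇u · ∇(v^q / u^(q-1))`. -/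
noncomputable def piconeGap (q t : ℝ) (g h : E) : ℝ :=
  ‖h‖ ^ q - q * t ^ (q - 1) * ‖g‖ ^ (q - 2) * ⟪g, h⟫ + (q - 1) * t ^ q * ‖g‖ ^ q

variable {q t : ℝ} {g h : E}

theorem piconeGap_eq_young_add_cauchySchwarz (hq : 1 < q) (ht : 0 ≤ t) :
    piconeGap q t g h =
      ((q - 1) * (t * ‖g‖) ^ q + ‖h‖ ^ q - q * ((t * ‖g‖) ^ (q - 1) * ‖h‖)) +
        q * t ^ (q - 1) * ‖g‖ ^ (q - 2) * (‖g‖ * ‖h‖ - ⟪g, h⟫) := by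
  have hsplit : ‖g‖ ^ (q - 1) = ‖g‖ ^ (q - 2) * ‖g‖ := by
    rw [← rpow_add_one' (norm_nonneg g) (by linarith)]; ring_nf
  rw [piconeGap, mul_rpow ht (norm_nonneg g), mul_rpow ht (norm_nonneg g), hsplit]
  ring

theorem piconeGap_nonneg (hq : 1 < q) (ht : 0 ≤ t) : 0 ≤ piconeGap q t g h := by
  rw [piconeGap_eq_young_add_cauchySchwarz hq ht]
  have hyoung := mul_rpow_sub_one_mul_le hq (mul_nonneg ht (norm_nonneg g)) (norm_nonneg h)
  have hcs : 0 ≤ q * t ^ (q - 1) * ‖g‖ ^ (q - 2) * (‖g‖ * ‖h‖ - ⟪g, h⟫) := by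
    have : 0 ≤ q := by linarith
    exact mul_nonneg (by positivity) (sub_nonneg.mpr (real_inner_le_norm g h))
  linarith

theorem piconeGap_eq_zero_iff (hq : 1 < q) (ht : 0 < t) : piconeGap q t g h = 0 ↔ h = t • g := by
  have htg : 0 ≤ t * ‖g‖ := mul_nonneg ht.le (norm_nonneg g)
  have hq₀ : 0 < q := by linarith
  have hcoeff : 0 ≤ q * t ^ (q - 1) * ‖g‖ ^ (q - 2) := by positivity
  have hcs := sub_nonneg.mpr (real_inner_le_norm g h)
  rw [piconeGap_eq_young_add_cauchySchwarz hq ht.le,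
    add_eq_zero_iff_of_nonneg (sub_nonneg.mpr (mul_rpow_sub_one_mul_le hq htg (norm_nonneg h)))
      (mul_nonneg hcoeff hcs),
    sub_eq_zero, eq_comm, mul_rpow_sub_one_mul_eq_iff hq htg (norm_nonneg h)]
  constructor
  · rintro ⟨hnorm, hgap⟩
    refine eq_smul_of_inner_eq_norm_mul_of_norm_eq ?_ hnorm.symm
    rcases eq_or_ne g 0 with rfl | hg
    · simp
    · have : 0 < q * t ^ (q - 1) * ‖g‖ ^ (q - 2) := by
        have := norm_pos_iff.mpr hg
        positivity
      linarith [(mul_eq_zero.mp hgap).resolve_left this.ne']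
  · rintro rfl
    refine ⟨by rw [norm_smul, norm_of_nonneg ht.le], ?_⟩
    rw [norm_smul, norm_of_nonneg ht.le, real_inner_smul_right, real_inner_self_eq_norm_mul_norm]
    ring

theorem piconeGap_add_piconeGap_swap (q t s : ℝ) (g h : E) :
    piconeGap q t g h + piconeGap q s h g =
      (1 + (q - 1) * t ^ q) * ‖g‖ ^ q - q * t ^ (q - 1) * ‖g‖ ^ (q - 2) * ⟪g, h⟫ +
        ((1 + (q - 1) * s ^ q) * ‖h‖ ^ q - q * s ^ (q - 1) * ‖h‖ ^ (q - 2) * ⟪h, g⟫) := by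
  unfold piconeGap
  ring

theorem eq_div_smul_iff {a b : ℝ} (ha : a ≠ 0) : h = (b / a) • g ↔ a • h = b • g := by
  rw [div_eq_inv_mul, mul_smul, eq_inv_smul_iff₀ ha]

theorem picone_integrand_nonneg_general (N : ℕ) (q : ℝ) (hq : 1 < q)
    (Ω : Set (EuclideanSpace ℝ (Fin N)))
    (u v : EuclideanSpace ℝ (Fin N) → ℝ)
    (hupos : ∀ x ∈ Ω, 0 < u x) (hvpos : ∀ x ∈ Ω, 0 < v x) :
    ∀ x ∈ Ω,
      0 ≤ (1 + (q - 1) * (v x / u x) ^ q) * ‖gradient u x‖ ^ q -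
            q * (v x / u x) ^ (q - 1) * ‖gradient u x‖ ^ (q - 2) *
              ⟪gradient u x, gradient v x⟫ +
          ((1 + (q - 1) * (u x / v x) ^ q) * ‖gradient v x‖ ^ q -
            q * (u x / v x) ^ (q - 1) * ‖gradient v x‖ ^ (q - 2) *
              ⟪gradient v x, gradient u x⟫) ∧
      ((1 + (q - 1) * (v x / u x) ^ q) * ‖gradient u x‖ ^ q -
            q * (v x / u x) ^ (q - 1) * ‖gradient u x‖ ^ (q - 2) *
              ⟪gradient u x, gradient v x⟫ +
          ((1 + (q - 1) * (u x / v x) ^ q) * ‖gradient v x‖ ^ q -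
            q * (u x / v x) ^ (q - 1) * ‖gradient v x‖ ^ (q - 2) *
              ⟪gradient v x, gradient u x⟫) = 0 ↔
        u x • gradient v x = v x • gradient u x) := by
  intro x hx
  have hvu : 0 < v x / u x := div_pos (hvpos x hx) (hupos x hx)
  have huv : 0 < u x / v x := div_pos (hupos x hx) (hvpos x hx)
  rw [← piconeGap_add_piconeGap_swap]
  have h₁ := piconeGap_nonneg (g := gradient u x) (h := gradient v x) hq hvu.le
  have h₂ := piconeGap_nonneg (g := gradient v x) (h := gradient u x) hq huv.le
  refine ⟨add_nonneg h₁ h₂, ?_⟩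
  rw [add_eq_zero_iff_of_nonneg h₁ h₂, piconeGap_eq_zero_iff hq hvu, piconeGap_eq_zero_iff hq huv,
    eq_div_smul_iff (hupos x hx).ne', eq_div_smul_iff (hvpos x hx).ne', eq_comm (a := v x • _),
    and_self]

theorem picone_integrand_nonneg (N : ℕ) (q : ℝ) (hq : 1 < q)
    (Ω : Set (EuclideanSpace ℝ (Fin N))) (hΩ : IsOpen Ω)
    (u v : EuclideanSpace ℝ (Fin N) → ℝ)
    (hu : DifferentiableOn ℝ u Ω) (hv : DifferentiableOn ℝ v Ω)
    (hupos : ∀ x ∈ Ω, 0 < u x) (hvpos : ∀ x ∈ Ω, 0 < v x) :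
    ∀ x ∈ Ω,
      0 ≤ (1 + (q - 1) * (v x / u x) ^ q) * ‖gradient u x‖ ^ q -
            q * (v x / u x) ^ (q - 1) * ‖gradient u x‖ ^ (q - 2) *
              ⟪gradient u x, gradient v x⟫ +
          ((1 + (q - 1) * (u x / v x) ^ q) * ‖gradient v x‖ ^ q -
            q * (u x / v x) ^ (q - 1) * ‖gradient v x‖ ^ (q - 2) *
              ⟪gradient v x, gradient u x⟫) ∧
      ((1 + (q - 1) * (v x / u x) ^ q) * ‖gradient u x‖ ^ q -
            q * (v x / u x) ^ (q - 1) * ‖gradient u x‖ ^ (q - 2) *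
              ⟪gradient u x, gradient v x⟫ +
          ((1 + (q - 1) * (u x / v x) ^ q) * ‖gradient v x‖ ^ q -
            q * (u x / v x) ^ (q - 1) * ‖gradient v x‖ ^ (q - 2) *
              ⟪gradient v x, gradient u x⟫) = 0 ↔
        u x • gradient v x = v x • gradient u x) :=
  picone_integrand_nonneg_general N q hq Ω u v hupos hvpos
end
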